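/- Let C be a chain whose set of terms is contained in a UBS V ⊆ 𝒲. Then the inseparable closure in 𝒲 of the set of terms of C contains a minimal UBS. -/

import Mathlib

open Set

variable {X : Type*}

/-- A wall: a subset with nonempty complement and nonempty itself. -/
def IsWall (h : Set X) : Prop := h.Nonempty ∧ hᶜ.Nonempty

/-- Walls `h` and `k` cross. -/
def Crosses (h k : Set X) : Prop :=
  (h ∩ k).Nonempty ∧ (h ∩ kᶜ).Nonempty ∧ (hᶜ ∩ k).Nonempty ∧ (hᶜ ∩ kᶜ).Nonempty

/-- The wall `u` lies in the halfspace `H` of the wall `w`. -/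
def LiesIn (u H w : Set X) : Prop := u ≠ w ∧ (u ⊆ H ∨ uᶜ ⊆ H)

/-- The wall `w` separates the walls `u` and `v`. -/
def Separates (w u v : Set X) : Prop :=
  u ≠ v ∧ u ≠ w ∧ v ≠ w ∧
  ∃ u' v' w', (u' = u ∨ u' = uᶜ) ∧ (v' = v ∨ v' = vᶜ) ∧ (w' = w ∨ w' = wᶜ) ∧
    u' ⊆ w' ∧ v' ⊆ w'ᶜ

/-- `S` contains a facing triple. -/
def HasFacingTriple (S : Set (Set X)) : Prop :=
  ∃ a ∈ S, ∃ b ∈ S, ∃ c ∈ S, a ≠ b ∧ a ≠ c ∧ b ≠ c ∧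
    ∃ a' b' c', (a' = a ∨ a' = aᶜ) ∧ (b' = b ∨ b' = bᶜ) ∧ (c' = c ∨ c' = cᶜ) ∧
      Disjoint a' b' ∧ Disjoint a' c' ∧ Disjoint b' c'

/-- `S` is inseparable with respect to the wall collection `W`. -/
def InseparableIn (W S : Set (Set X)) : Prop :=
  ∀ u ∈ S, ∀ v ∈ S, ∀ w ∈ W, Separates w u v → w ∈ S

/-- `S` is unidirectional: for each wall `w ∈ S`, at most one of the two halfspaces of `w`
contains infinitely many walls of `S`. -/
def Unidirectional (S : Set (Set X)) : Prop :=
  ∀ w ∈ S, {u ∈ S | LiesIn u w w}.Finite ∨ {u ∈ S | LiesIn u wᶜ w}.Finite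

/-- `V` is a UBS in the wall collection `W`. -/
def IsUBS (W V : Set (Set X)) : Prop :=
  V ⊆ W ∧ V.Infinite ∧ InseparableIn W V ∧ Unidirectional V ∧ ¬ HasFacingTriple V

/-- Almost-equivalence of sets of walls. -/
def AlmostEq (S T : Set (Set X)) : Prop := (S \ T).Finite ∧ (T \ S).Finite

/-- `U` is a minimal UBS in `W`. -/
def MinUBS (W U : Set (Set X)) : Prop :=
  IsUBS W U ∧ ∀ U', IsUBS W U' → U' ⊆ U → AlmostEq U' U

/-- `A ≺ B`: every wall of `B` crosses all but finitely many walls of `A`. -/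
def Prec (A B : Set (Set X)) : Prop := ∀ b ∈ B, {a ∈ A | ¬ Crosses b a}.Finite

/-- Distinct members of `W` determine distinct partitions. -/
def Admissible (W : Set (Set X)) : Prop := ∀ h ∈ W, ∀ k ∈ W, h ≠ k → h ≠ kᶜ

/-- No infinite subset of `W` consists of pairwise-crossing walls. -/
def NoInfCross (W : Set (Set X)) : Prop := ∀ S ⊆ W, S.Pairwise Crosses → S.Finite

/-- `W` has dimension at most `D`: every pairwise-crossing subset has cardinality at most `D`. -/
def DimLE (W : Set (Set X)) (D : ℕ) : Prop :=
  ∀ S ⊆ W, S.Pairwise Crosses → S.Finite ∧ S.ncard ≤ D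

/-- `c` is a chain: an injective sequence of walls with `c n` separating `c (n-1)` and
`c (n+1)` for `n ≥ 1`. -/
def IsChainSeq (c : ℕ → Set X) : Prop :=
  Function.Injective c ∧ ∀ n, Separates (c (n + 1)) (c n) (c (n + 2))

/-- The chain `c` is inextensible in `S`: no wall of `S` has a halfspace containing every
term of `c`. -/
def InextensibleIn (S : Set (Set X)) (c : ℕ → Set X) : Prop :=
  ¬ ∃ w ∈ S, ∃ H, (H = w ∨ H = wᶜ) ∧ ∀ n, LiesIn (c n) H w

/-- The inseparable closure in `W` of a set `C` of walls. -/
def insepClosure (W C : Set (Set X)) : Set (Set X) :=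
  ⋂₀ {S | C ⊆ S ∧ S ⊆ W ∧ InseparableIn W S}

/-! A chain orients into a strictly increasing sequence of halfspaces `G 0 ⊂ G 1 ⊂ ⋯` (a ladder),
and the inseparable closure of the rungs consists of the walls having a halfspace `δ` with
`G a ⊆ δ ⊆ G b`. Any two such halfspaces are nested or their walls cross.

If only finitely many walls of the closure cross each rung, the closure is a minimal UBS: a sub-UBS
must contain a tail of the rungs, and then everything except finitely many walls lying on one side
of a rung or crossing it. Otherwise infinitely many walls of the closure cross one rung; their
halfspaces have finite down-sets by unidirectionality and no infinite antichains by the absence of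
infinite crossing families, so by Ramsey they contain an increasing sequence, a ladder whose whole
closure crosses that rung. Iterating would produce infinitely many pairwise crossing walls. -/

section Halfspaces

variable {h k u v w γ δ : Set X}

theorem IsWall.halfspace (hw : IsWall h) (hγ : γ = h ∨ γ = hᶜ) : IsWall γ := by
  rcases hγ with rfl | rfl
  · exact hw
  · exact ⟨hw.2, by rw [compl_compl]; exact hw.1⟩

theorem halfspace_compl (hγ : γ = h ∨ γ = hᶜ) : γᶜ = h ∨ γᶜ = hᶜ := by
  rcases hγ with rfl | rfl <;> simp

theorem halfspace_eq_or_eq_compl (hγ : γ = h ∨ γ = hᶜ) (hδ : δ = h ∨ δ = hᶜ) :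
    δ = γ ∨ δ = γᶜ := by
  rcases hγ with rfl | rfl <;> rcases hδ with rfl | rfl <;> simp

theorem liesIn_of_halfspace_subset {H : Set X} (hne : u ≠ w) (hγ : γ = u ∨ γ = uᶜ)
    (hγH : γ ⊆ H) : LiesIn u H w :=
  ⟨hne, by rcases hγ with rfl | rfl; exacts [Or.inl hγH, Or.inr hγH]⟩

theorem Admissible.eq_of_halfspace {W : Set (Set X)} (hadm : Admissible W) (hh : h ∈ W)
    (hk : k ∈ W) (hγh : γ = h ∨ γ = hᶜ) (hγk : γ = k ∨ γ = kᶜ) : h = k := by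
  by_contra hne
  rcases hγh with rfl | rfl <;> rcases hγk with e | e
  · exact hne e
  · exact hadm _ hh _ hk hne e
  · exact hadm _ hk _ hh (Ne.symm hne) e.symm
  · exact hne (compl_injective e)

/-- The orientation step for chains: `h` separates some wall from `k` (via `B ⊆ Pᶜ`) and `k`
separates `h` from some wall (via `A ⊆ Q`). -/
theorem Admissible.ssubset_of_subset_compl {W : Set (Set X)} (hadm : Admissible W) (hh : h ∈ W)
    (hk : k ∈ W) (hhk : h ≠ k) (hwall : IsWall h) {P A B Q : Set X}
    (hP : P = h ∨ P = hᶜ) (hA : A = h ∨ A = hᶜ) (hB : B = k ∨ B = kᶜ) (hQ : Q = k ∨ Q = kᶜ)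
    (hBP : B ⊆ Pᶜ) (hAQ : A ⊆ Q) : P ⊂ Q := by
  refine ssubset_iff_subset_ne.2 ⟨?_, fun e => hhk (hadm.eq_of_halfspace hh hk hP (e ▸ hQ))⟩
  rcases halfspace_eq_or_eq_compl hB hQ with rfl | rfl
  · exfalso
    rcases halfspace_eq_or_eq_compl hP hA with rfl | rfl
    · obtain ⟨x, hx⟩ := (hwall.halfspace hP).1
      exact hBP (hAQ hx) hx
    · exact hhk (hadm.eq_of_halfspace hh hk (halfspace_compl hP) (subset_antisymm hBP hAQ ▸ hB))
  · exact subset_compl_comm.1 hBP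

theorem Crosses.isWall (hc : Crosses h k) : IsWall h :=
  ⟨hc.1.mono inter_subset_left, hc.2.2.1.mono inter_subset_left⟩

theorem Crosses.symm (hc : Crosses h k) : Crosses k h := by
  obtain ⟨h1, h2, h3, h4⟩ := hc
  exact ⟨by rwa [inter_comm], by rwa [inter_comm], by rwa [inter_comm], by rwa [inter_comm]⟩

theorem Crosses.ne (hc : Crosses h k) : h ≠ k := by
  rintro rfl
  simpa using hc.2.1

theorem Crosses.inter_nonempty (hc : Crosses h k) (hγ : γ = h ∨ γ = hᶜ) (hδ : δ = k ∨ δ = kᶜ) :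
    (γ ∩ δ).Nonempty := by
  rcases hγ with rfl | rfl <;> rcases hδ with rfl | rfl
  exacts [hc.1, hc.2.1, hc.2.2.1, hc.2.2.2]

theorem crosses_of_halfspaces (hγ : γ = h ∨ γ = hᶜ) (hδ : δ = k ∨ δ = kᶜ)
    (h1 : (γ ∩ δ).Nonempty) (h2 : (γ ∩ δᶜ).Nonempty) (h3 : (γᶜ ∩ δ).Nonempty)
    (h4 : (γᶜ ∩ δᶜ).Nonempty) : Crosses h k := by
  rcases hγ with rfl | rfl <;> rcases hδ with rfl | rfl <;> try simp only [compl_compl] at *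
  exacts [⟨h1, h2, h3, h4⟩, ⟨h2, h1, h4, h3⟩, ⟨h3, h4, h1, h2⟩, ⟨h4, h3, h2, h1⟩]

theorem subset_or_subset_or_crosses (hγ : γ = h ∨ γ = hᶜ) (hδ : δ = k ∨ δ = kᶜ)
    (h1 : (γ ∩ δ).Nonempty) (h4 : (γᶜ ∩ δᶜ).Nonempty) : γ ⊆ δ ∨ δ ⊆ γ ∨ Crosses h k := by
  by_cases hγδ : γ ⊆ δ
  · exact Or.inl hγδ
  by_cases hδγ : δ ⊆ γ
  · exact Or.inr (Or.inl hδγ)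
  refine Or.inr (Or.inr (crosses_of_halfspaces hγ hδ h1 (inter_compl_nonempty_iff.2 hγδ) ?_ h4))
  rw [inter_comm]
  exact inter_compl_nonempty_iff.2 hδγ

theorem crosses_of_subset_of_subset {x γ₁ γ₂ : Set X} (h₁ : Crosses u w) (h₂ : Crosses v w)
    (hγ₁ : γ₁ = u ∨ γ₁ = uᶜ) (hγ₂ : γ₂ = v ∨ γ₂ = vᶜ) (hδ : δ = x ∨ δ = xᶜ)
    (h₁δ : γ₁ ⊆ δ) (hδ₂ : δ ⊆ γ₂) : Crosses x w := by
  have hw : w = w ∨ w = wᶜ := Or.inl rfl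
  have hδ₂' : δᶜ ⊇ γ₂ᶜ := compl_subset_compl.2 hδ₂
  exact crosses_of_halfspaces hδ hw
    ((h₁.inter_nonempty hγ₁ hw).mono (inter_subset_inter_left _ h₁δ))
    ((h₁.inter_nonempty hγ₁ (halfspace_compl hw)).mono (inter_subset_inter_left _ h₁δ))
    ((h₂.inter_nonempty (halfspace_compl hγ₂) hw).mono (inter_subset_inter_left _ hδ₂'))
    ((h₂.inter_nonempty (halfspace_compl hγ₂) (halfspace_compl hw)).mono
      (inter_subset_inter_left _ hδ₂'))

end Halfspaces

section WallSets

variable {W V U C S : Set (Set X)}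

theorem subset_insepClosure : C ⊆ insepClosure W C :=
  fun _ hu => mem_sInter.2 fun _ hS => hS.1 hu

theorem insepClosure_subset (hCS : C ⊆ S) (hSW : S ⊆ W) (hS : InseparableIn W S) :
    insepClosure W C ⊆ S :=
  sInter_subset_of_mem ⟨hCS, hSW, hS⟩

theorem inseparableIn_insepClosure : InseparableIn W (insepClosure W C) :=
  fun u hu v hv w hw hsep => mem_sInter.2 fun S hS =>
    hS.2.2 u (mem_sInter.1 hu S hS) v (mem_sInter.1 hv S hS) w hw hsep

theorem IsUBS.of_subset (hV : IsUBS W V) (hUV : U ⊆ V) (hU : U.Infinite)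
    (hUins : InseparableIn W U) : IsUBS W U := by
  obtain ⟨hVW, -, -, hVuni, hVnft⟩ := hV
  have hsub : ∀ H w, {u ∈ U | LiesIn u H w} ⊆ {u ∈ V | LiesIn u H w} :=
    fun _ _ u hu => ⟨hUV hu.1, hu.2⟩
  refine ⟨hUV.trans hVW, hU, hUins, fun w hw => ?_, ?_⟩
  · exact (hVuni w (hUV hw)).imp (·.subset (hsub _ _)) (·.subset (hsub _ _))
  · rintro ⟨a, ha, b, hb, c, hc, hfacing⟩
    exact hVnft ⟨a, hUV ha, b, hUV hb, c, hUV hc, hfacing⟩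

theorem Unidirectional.finite_liesIn_of_infinite {w γ : Set X} (hV : Unidirectional V)
    (hw : w ∈ V) (hγ : γ = w ∨ γ = wᶜ) (hinf : {u ∈ V | LiesIn u γᶜ w}.Infinite) :
    {u ∈ V | LiesIn u γ w}.Finite := by
  rcases hγ with rfl | rfl
  · exact (hV γ hw).resolve_right hinf
  · rw [compl_compl] at hinf
    exact (hV w hw).resolve_left hinf

theorem NoInfCross.not_forall_lt_crosses (hW : NoInfCross W) {f : ℕ → Set X}
    (hfW : ∀ k, f k ∈ W) : ¬ ∀ k l, k < l → Crosses (f k) (f l) := by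
  intro hf
  have hcross : ∀ k l, k ≠ l → Crosses (f k) (f l) := fun k l hkl =>
    hkl.lt_or_gt.elim (hf k l) fun h => (hf l k h).symm
  refine infinite_range_of_injective (fun k l hkl => ?_) (hW _ (range_subset_iff.2 hfW) ?_)
  · by_contra hne
    exact (hcross k l hne).ne hkl
  · rintro _ ⟨k, rfl⟩ _ ⟨l, rfl⟩ hne
    exact hcross k l (ne_of_apply_ne f hne)

theorem NoInfCross.exists_injective_monotone (hW : NoInfCross W) {A : Set (Set X)}
    (hAW : A ⊆ W) (hA : A.Infinite) (δ : Set X → Set X)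
    (hcomp : ∀ u ∈ A, ∀ v ∈ A, δ u ⊆ δ v ∨ δ v ⊆ δ u ∨ Crosses u v)
    (hdown : ∀ u ∈ A, {v ∈ A | δ v ⊆ δ u}.Finite) :
    ∃ e : ℕ → Set X, Function.Injective e ∧ (∀ k, e k ∈ A) ∧ Monotone (δ ∘ e) := by
  set a : ℕ → Set X := fun n => hA.natEmbedding A n
  have ha_inj : a.Injective := Subtype.val_injective.comp (hA.natEmbedding A).injective
  have haA : ∀ n, a n ∈ A := fun n => (hA.natEmbedding A n).2
  -- Ramsey, twice: a decreasing subsequence contradicts `hdown`, an antichain crosses pairwise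
  obtain ⟨g, hinc | hninc⟩ := exists_increasing_or_nonincreasing_subseq' (δ · ⊆ δ ·) a
  · exact ⟨a ∘ g, ha_inj.comp g.injective, fun k => haA _, monotone_nat_of_le_succ hinc⟩
  exfalso
  obtain ⟨g', hdec | hndec⟩ := exists_increasing_or_nonincreasing_subseq' (δ · ⊇ δ ·) (a ∘ g)
  · have hanti : Antitone (δ ∘ a ∘ g ∘ g') := antitone_nat_of_succ_le hdec
    refine infinite_range_of_injective (ha_inj.comp (g.injective.comp g'.injective))
      ((hdown _ (haA (g (g' 0)))).subset ?_)
    rintro _ ⟨k, rfl⟩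
    exact ⟨haA _, hanti (Nat.zero_le k)⟩
  · refine hW.not_forall_lt_crosses (f := a ∘ g ∘ g') (fun k => hAW (haA _)) fun k l hkl => ?_
    rcases hcomp _ (haA (g (g' k))) _ (haA (g (g' l))) with h | h | h
    · exact absurd h (hninc _ _ (g'.strictMono hkl))
    · exact absurd h (hndec k l hkl)
    · exact h

theorem NoInfCross.not_forall_exists_crossing (hW : NoInfCross W) {𝒮 : Set (Set (Set X))}
    (h𝒮W : ∀ S ∈ 𝒮, S ⊆ W) (h𝒮 : 𝒮.Nonempty) :
    ¬ ∀ S ∈ 𝒮, ∃ w ∈ S, ∃ T ∈ 𝒮, T ⊆ S ∧ ∀ u ∈ T, Crosses u w := by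
  intro hstep
  choose! w hw T hT hTS hcross using hstep
  obtain ⟨S₀, hS₀⟩ := h𝒮
  have hS : ∀ k, T^[k] S₀ ∈ 𝒮 := by
    intro k
    induction k with
    | zero => exact hS₀
    | succ k ih => rw [Function.iterate_succ_apply']; exact hT _ ih
  have hanti : Antitone fun k => T^[k] S₀ := antitone_nat_of_succ_le fun k => by
    simp only [Function.iterate_succ_apply']
    exact hTS _ (hS k)
  refine hW.not_forall_lt_crosses (f := fun k => w (T^[k] S₀))
    (fun k => h𝒮W _ (hS k) (hw _ (hS k))) fun k l hkl => (hcross _ (hS k) _ ?_).symm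
  rw [← Function.iterate_succ_apply' T]
  exact hanti hkl (hw _ (hS l))

end WallSets

structure Ladder (X : Type*) where
  wall : ℕ → Set X
  half : ℕ → Set X
  half_eq : ∀ n, half n = wall n ∨ half n = (wall n)ᶜ
  strictMono : StrictMono half
  isWall : ∀ n, IsWall (wall n)

namespace Ladder

variable (L : Ladder X) {W V : Set (Set X)} {u w γ δ : Set X}

theorem half_mono : Monotone L.half := L.strictMono.monotone

theorem half_nonempty (n : ℕ) : (L.half n).Nonempty :=
  ((L.isWall n).halfspace (L.half_eq n)).1

theorem compl_half_nonempty (n : ℕ) : (L.half n)ᶜ.Nonempty :=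
  ((L.isWall n).halfspace (L.half_eq n)).2

theorem wall_injective : Function.Injective L.wall := by
  intro m n hmn
  by_contra hne
  wlog hlt : m < n generalizing m n
  · exact this hmn.symm (Ne.symm hne) ((not_lt.1 hlt).lt_of_ne (Ne.symm hne))
  have hsub := L.strictMono hlt
  rcases halfspace_eq_or_eq_compl (L.half_eq m) (by rw [hmn]; exact L.half_eq n) with h | h
  · exact hsub.ne h.symm
  · obtain ⟨x, hx⟩ := L.half_nonempty m
    exact (h ▸ hsub.subset hx) hx

theorem inter_nonempty_of_half_subset {a b : ℕ} (ha : L.half a ⊆ γ) (hb : L.half b ⊆ δ) :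
    (γ ∩ δ).Nonempty :=
  (L.half_nonempty (min a b)).mono (subset_inter
    ((L.half_mono (min_le_left a b)).trans ha) ((L.half_mono (min_le_right a b)).trans hb))

theorem compl_inter_nonempty_of_subset_half {a b : ℕ} (ha : γ ⊆ L.half a) (hb : δ ⊆ L.half b) :
    (γᶜ ∩ δᶜ).Nonempty :=
  (L.compl_half_nonempty (max a b)).mono (subset_inter
    (compl_subset_compl.2 (ha.trans (L.half_mono (le_max_left a b))))
    (compl_subset_compl.2 (hb.trans (L.half_mono (le_max_right a b)))))

def Between (δ : Set X) : Prop := ∃ a b, L.half a ⊆ δ ∧ δ ⊆ L.half b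

theorem between_half (n : ℕ) : L.Between (L.half n) := ⟨n, n, subset_rfl, subset_rfl⟩

variable {L}

theorem Between.subset_or_subset_or_crosses {v : Set X} (hδ : L.Between δ) (hγ : L.Between γ)
    (hδu : δ = u ∨ δ = uᶜ) (hγv : γ = v ∨ γ = vᶜ) : δ ⊆ γ ∨ γ ⊆ δ ∨ Crosses u v := by
  obtain ⟨a, b, ha, hb⟩ := hδ
  obtain ⟨c, d, hc, hd⟩ := hγ
  exact _root_.subset_or_subset_or_crosses hδu hγv (L.inter_nonempty_of_half_subset ha hc)
    (L.compl_inter_nonempty_of_subset_half hb hd)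

theorem Between.exists_of_subset {ε : Set X} (hδ : L.Between δ) (hγ : γ = δ ∨ γ = δᶜ)
    (hγε : γ ⊆ ε) : (∃ a, L.half a ⊆ ε) ∨ ∃ b, εᶜ ⊆ L.half b := by
  obtain ⟨a, b, ha, hb⟩ := hδ
  rcases hγ with rfl | rfl
  · exact Or.inl ⟨a, ha.trans hγε⟩
  · exact Or.inr ⟨b, (compl_subset_comm.1 hγε).trans hb⟩

variable (L)

theorem inseparableIn_setOf_between :
    InseparableIn W {u ∈ W | ∃ δ, (δ = u ∨ δ = uᶜ) ∧ L.Between δ} := by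
  rintro u ⟨-, δ, hδ, hδb⟩ v ⟨-, γ, hγ, hγb⟩ w hw ⟨-, -, -, u', v', w', hu', hv', hw', hu'w', hv'w'⟩
  refine ⟨hw, ?_⟩
  rcases hδb.exists_of_subset (halfspace_eq_or_eq_compl hδ hu') hu'w' with ⟨a, ha⟩ | ⟨b, hb⟩ <;>
    rcases hγb.exists_of_subset (halfspace_eq_or_eq_compl hγ hv') hv'w' with ⟨c, hc⟩ | ⟨d, hd⟩
  · simpa using L.inter_nonempty_of_half_subset ha hc
  · exact ⟨w', hw', a, d, ha, by rwa [compl_compl] at hd⟩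
  · exact ⟨w'ᶜ, halfspace_compl hw', c, b, hc, hb⟩
  · simpa using L.compl_inter_nonempty_of_subset_half hb hd

theorem exists_between_of_mem_insepClosure (hLW : ∀ n, L.wall n ∈ W)
    (hu : u ∈ insepClosure W (range L.wall)) : ∃ δ, (δ = u ∨ δ = uᶜ) ∧ L.Between δ := by
  refine (insepClosure_subset ?_ (fun _ h => h.1) L.inseparableIn_setOf_between hu).2
  rintro _ ⟨n, rfl⟩
  exact ⟨hLW n, _, L.half_eq n, L.between_half n⟩

/-- The rungs beyond `b` lie in `δᶜ`, so unidirectionality leaves finitely many walls in `δ`. -/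
theorem finite_liesIn {b : ℕ} (hV : Unidirectional V) (hLV : ∀ n, L.wall n ∈ V) (hw : w ∈ V)
    (hδw : δ = w ∨ δ = wᶜ) (hδ : δ ⊆ L.half b) : {u ∈ V | LiesIn u δ w}.Finite := by
  refine hV.finite_liesIn_of_infinite hw hδw
    ((((Ici_infinite b).image L.wall_injective.injOn).sdiff (finite_singleton w)).mono ?_)
  rintro _ ⟨⟨k, hk, rfl⟩, hkw⟩
  exact ⟨hLV k, liesIn_of_halfspace_subset hkw (halfspace_compl (L.half_eq k))
    (compl_subset_compl.2 (hδ.trans (L.half_mono hk)))⟩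

theorem insepClosure_subset_of_isUBS (hV : IsUBS W V) (hLV : ∀ n, L.wall n ∈ V) :
    insepClosure W (range L.wall) ⊆ V :=
  insepClosure_subset (range_subset_iff.2 hLV) hV.1 hV.2.2.1

theorem isUBS_insepClosure (hV : IsUBS W V) (hLV : ∀ n, L.wall n ∈ V) :
    IsUBS W (insepClosure W (range L.wall)) :=
  hV.of_subset (L.insepClosure_subset_of_isUBS hV hLV)
    ((infinite_range_of_injective L.wall_injective).mono subset_insepClosure)
    inseparableIn_insepClosure

theorem exists_forall_lt_wall_mem (hV : IsUBS W V) (hLV : ∀ n, L.wall n ∈ V)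
    (hfin : ∀ n, {u ∈ insepClosure W (range L.wall) | Crosses u (L.wall n)}.Finite)
    {U : Set (Set X)} (hU : IsUBS W U) (hUK : U ⊆ insepClosure W (range L.wall)) :
    ∃ M, ∀ m, M < m → L.wall m ∈ U := by
  have hLW : ∀ n, L.wall n ∈ W := fun n => hV.1 (hLV n)
  have hKV := L.insepClosure_subset_of_isUBS hV hLV
  obtain ⟨u₀, hu₀⟩ := hU.2.1.nonempty
  obtain ⟨δ₀, hδ₀, -, b₀, -, hδ₀b₀⟩ := L.exists_between_of_mem_insepClosure hLW (hUK hu₀)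
  refine ⟨b₀, fun m hm => ?_⟩
  -- otherwise, up to two walls, `U` lies in `half m` or crosses the `m`-th rung: finitely many
  have : ∃ u₁ ∈ U, u₁ ∉ ({L.wall m, u₀} : Set (Set X)) ∧
      ∃ δ₁, (δ₁ = u₁ ∨ δ₁ = u₁ᶜ) ∧ L.half m ⊆ δ₁ := by
    by_contra! hnone
    refine hU.2.1 ((((L.finite_liesIn hV.2.2.2.1 hLV (hLV m) (L.half_eq m) subset_rfl).union
      (hfin m)).union (toFinite {L.wall m, u₀})).subset fun u hu => ?_)
    by_cases hu' : u ∈ ({L.wall m, u₀} : Set (Set X))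
    · exact Or.inr hu'
    obtain ⟨δ, hδ, hbtw⟩ := L.exists_between_of_mem_insepClosure hLW (hUK hu)
    rcases hbtw.subset_or_subset_or_crosses (L.between_half m) hδ (L.half_eq m) with h | h | h
    · exact Or.inl (Or.inl ⟨hKV (hUK hu), liesIn_of_halfspace_subset (fun e => hu' (Or.inl e)) hδ h⟩)
    · exact absurd h (hnone u hu hu' δ hδ)
    · exact Or.inl (Or.inr ⟨hUK hu, h⟩)
  obtain ⟨u₁, hu₁, hu₁', δ₁, hδ₁, hmδ₁⟩ := this
  by_cases h₀ : u₀ = L.wall m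
  · exact h₀ ▸ hu₀
  exact hU.2.2.1 u₀ hu₀ u₁ hu₁ (L.wall m) (hLW m)
    ⟨fun e => hu₁' (Or.inr e.symm), h₀, fun e => hu₁' (Or.inl e), δ₀, δ₁ᶜ, L.half m, hδ₀,
      halfspace_compl hδ₁, L.half_eq m, hδ₀b₀.trans (L.half_mono hm.le),
      compl_subset_compl.2 hmδ₁⟩

theorem minUBS_insepClosure (hadm : Admissible W) (hV : IsUBS W V) (hLV : ∀ n, L.wall n ∈ V)
    (hfin : ∀ n, {u ∈ insepClosure W (range L.wall) | Crosses u (L.wall n)}.Finite) :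
    MinUBS W (insepClosure W (range L.wall)) := by
  have hLW : ∀ n, L.wall n ∈ W := fun n => hV.1 (hLV n)
  have hKV := L.insepClosure_subset_of_isUBS hV hLV
  refine ⟨L.isUBS_insepClosure hV hLV, fun U hU hUK => ⟨by rw [sdiff_eq_empty.2 hUK]; exact finite_empty, ?_⟩⟩
  obtain ⟨M, hM⟩ := L.exists_forall_lt_wall_mem hV hLV hfin hU hUK
  refine (((finite_Iic M).image L.wall).union ((L.finite_liesIn hV.2.2.2.1 hLV (hLV (M + 1))
    (L.half_eq (M + 1)) subset_rfl).union (hfin (M + 1)))).subset ?_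
  rintro u ⟨huK, huU⟩
  by_cases hr : u ∈ range L.wall
  · obtain ⟨k, rfl⟩ := hr
    exact Or.inl ⟨k, not_lt.1 fun h => huU (hM k h), rfl⟩
  have hum : u ≠ L.wall (M + 1) := fun e => hr ⟨_, e.symm⟩
  obtain ⟨δ, hδ, hbtw⟩ := L.exists_between_of_mem_insepClosure hLW huK
  rcases hbtw.subset_or_subset_or_crosses (L.between_half (M + 1)) hδ (L.half_eq (M + 1))
    with h | h | h
  · exact Or.inr (Or.inl ⟨hKV huK, liesIn_of_halfspace_subset hum hδ h⟩)
  · -- `u` separates the rungs `M + 1` and `b`, both in `U`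
    exfalso
    obtain ⟨-, b, -, hb⟩ := hbtw
    have hMb : M + 1 < b := by
      by_contra! hbM
      have hδM : δ = L.half (M + 1) := subset_antisymm (hb.trans (L.half_mono hbM)) h
      exact hum (hadm.eq_of_halfspace (hV.1 (hKV huK)) (hLW _) hδ (hδM ▸ L.half_eq _))
    exact huU (hU.2.2.1 _ (hM _ M.lt_succ_self) _ (hM b (by omega)) u (hV.1 (hKV huK))
      ⟨L.wall_injective.ne hMb.ne, hum.symm, fun e => hr ⟨b, e⟩, L.half (M + 1), (L.half b)ᶜ, δ,
        L.half_eq _, halfspace_compl (L.half_eq b), hδ, h, compl_subset_compl.2 hb⟩)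
  · exact Or.inr (Or.inr ⟨huK, h⟩)

theorem exists_ladder_forall_crosses (hadm : Admissible W) (hnic : NoInfCross W)
    (hV : IsUBS W V) (hLV : ∀ n, L.wall n ∈ V) {n : ℕ}
    (hinf : {u ∈ insepClosure W (range L.wall) | Crosses u (L.wall n)}.Infinite) :
    ∃ L' : Ladder X, range L'.wall ⊆ insepClosure W (range L.wall) ∧
      ∀ u ∈ insepClosure W (range L'.wall), Crosses u (L.wall n) := by
  set A := {u ∈ insepClosure W (range L.wall) | Crosses u (L.wall n)}
  have hLW : ∀ n, L.wall n ∈ W := fun n => hV.1 (hLV n)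
  have hAV : A ⊆ V := fun u hu => L.insepClosure_subset_of_isUBS hV hLV hu.1
  choose! δ hδ hbtw using fun u (hu : u ∈ A) => L.exists_between_of_mem_insepClosure hLW hu.1
  have hdown : ∀ u ∈ A, {v ∈ A | δ v ⊆ δ u}.Finite := by
    intro u hu
    obtain ⟨-, b, -, hb⟩ := hbtw u hu
    refine ((L.finite_liesIn hV.2.2.2.1 hLV (hAV hu) (hδ u hu) hb).union
      (finite_singleton u)).subset fun v ⟨hv, hvu⟩ => ?_
    by_cases e : v = u
    · exact Or.inr e
    · exact Or.inl ⟨hAV hv, liesIn_of_halfspace_subset e (hδ v hv) hvu⟩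
  obtain ⟨e, he, heA, hmono⟩ := hnic.exists_injective_monotone (hAV.trans hV.1) hinf δ
    (fun u hu v hv => (hbtw u hu).subset_or_subset_or_crosses (hbtw v hv) (hδ u hu) (hδ v hv))
    hdown
  have hδe : Function.Injective (δ ∘ e) := fun k l (hkl : δ (e k) = δ (e l)) => he <| hadm.eq_of_halfspace
    (hV.1 (hAV (heA k))) (hV.1 (hAV (heA l))) (hδ _ (heA k)) (hkl ▸ hδ _ (heA l))
  let L' : Ladder X := ⟨e, δ ∘ e, fun k => hδ _ (heA k), hmono.strictMono_of_injective hδe,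
    fun k => (heA k).2.isWall⟩
  refine ⟨L', range_subset_iff.2 fun k => (heA k).1, fun u hu => ?_⟩
  obtain ⟨γ, hγ, i, j, hi, hj⟩ :=
    L'.exists_between_of_mem_insepClosure (fun k => hV.1 (hAV (heA k))) hu
  exact crosses_of_subset_of_subset (heA i).2 (heA j).2 (hδ _ (heA i)) (hδ _ (heA j)) hγ hi hj

theorem exists_minUBS_subset_insepClosure (hadm : Admissible W) (hnic : NoInfCross W)
    (hV : IsUBS W V) (hLV : ∀ n, L.wall n ∈ V) :
    ∃ U, MinUBS W U ∧ U ⊆ insepClosure W (range L.wall) := by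
  by_contra! hnone
  set K := insepClosure W (range L.wall)
  have hKV : K ⊆ V := L.insepClosure_subset_of_isUBS hV hLV
  have hKW : K ⊆ W := hKV.trans hV.1
  have hsubK : ∀ L' : Ladder X, range L'.wall ⊆ K → insepClosure W (range L'.wall) ⊆ K :=
    fun L' hL' => insepClosure_subset hL' hKW inseparableIn_insepClosure
  refine hnic.not_forall_exists_crossing
    (𝒮 := {S | ∃ L' : Ladder X, range L'.wall ⊆ K ∧ S = insepClosure W (range L'.wall)})
    (fun _ ⟨L', hL', hS⟩ => hS ▸ (hsubK L' hL').trans hKW)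
    ⟨K, L, subset_insepClosure, rfl⟩ ?_
  rintro _ ⟨L', hL', rfl⟩
  have hL'V : ∀ n, L'.wall n ∈ V := fun n => hKV (hL' ⟨n, rfl⟩)
  obtain ⟨n, hn⟩ : ∃ n, {u ∈ insepClosure W (range L'.wall) | Crosses u (L'.wall n)}.Infinite := by
    by_contra! hfin
    exact hnone _ (L'.minUBS_insepClosure hadm hV hL'V hfin) (hsubK L' hL')
  obtain ⟨L'', hL'', hcross⟩ := L'.exists_ladder_forall_crosses hadm hnic hV hL'V hn
  exact ⟨L'.wall n, subset_insepClosure ⟨n, rfl⟩, _,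
    ⟨L'', hL''.trans (hsubK L' hL'), rfl⟩,
    insepClosure_subset hL'' ((hsubK L' hL').trans hKW) inseparableIn_insepClosure,
    hcross⟩

end Ladder

theorem IsChainSeq.exists_ladder_wall_eq {W : Set (Set X)} {c : ℕ → Set X} (hc : IsChainSeq c)
    (hW : ∀ h ∈ W, IsWall h) (hadm : Admissible W) (hcW : ∀ n, c n ∈ W) :
    ∃ L : Ladder X, L.wall = c := by
  choose A B P hA hB hP hAP hBP using fun n => (hc.2 n).2.2.2
  let H : ℕ → Set X := fun
    | 0 => A 0
    | n + 1 => P n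
  have hH : ∀ n, H n = c n ∨ H n = (c n)ᶜ
    | 0 => hA 0
    | n + 1 => hP n
  have hstep : ∀ n, H n ⊂ H (n + 1)
    | 0 => ssubset_iff_subset_ne.2 ⟨hAP 0, fun e : A 0 = P 0 =>
        (hc.2 0).2.1 (hadm.eq_of_halfspace (hcW 0) (hcW 1) (hA 0) (e ▸ hP 0))⟩
    | n + 1 => hadm.ssubset_of_subset_compl (hcW (n + 1)) (hcW (n + 2)) (hc.2 n).2.2.1.symm
        (hW _ (hcW _)) (hP n) (hA (n + 1)) (hB n) (hP (n + 1)) (hBP n) (hAP (n + 1))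
  exact ⟨⟨c, H, hH, strictMono_nat_of_lt_succ hstep, fun n => hW _ (hcW n)⟩, rfl⟩

theorem insep_closure_of_chain_contains_minimal_general (W : Set (Set X))
    (hWwall : ∀ h ∈ W, IsWall h)
    (hWadm : Admissible W) (hWnic : NoInfCross W)
    (V : Set (Set X)) (hV : IsUBS W V)
    (c : ℕ → Set X) (hc : IsChainSeq c) (hcV : ∀ n, c n ∈ V) :
    ∃ U, MinUBS W U ∧ U ⊆ insepClosure W (Set.range c) := by
  obtain ⟨L, rfl⟩ := hc.exists_ladder_wall_eq hWwall hWadm fun n => hV.1 (hcV n)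
  exact L.exists_minUBS_subset_insepClosure hWadm hWnic hV hcV

/-- The inseparable closure of a chain contained in a UBS contains a minimal UBS. -/
theorem insep_closure_of_chain_contains_minimal (W : Set (Set X))
    (hWc : W.Countable) (hWwall : ∀ h ∈ W, IsWall h)
    (hWadm : Admissible W) (hWnic : NoInfCross W)
    (V : Set (Set X)) (hV : IsUBS W V)
    (c : ℕ → Set X) (hc : IsChainSeq c) (hcV : ∀ n, c n ∈ V) :
    ∃ U, MinUBS W U ∧ U ⊆ insepClosure W (Set.range c) :=
  insep_closure_of_chain_contains_minimal_general W hWwall hWadm hWnic V hV c hc hcV
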